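/- There exists a c.e. set A ⊆ ℕ of density 1 such that no computable subset of A has density 1. -/

import Mathlib

open Filter

open scoped Classical in
/-- `ρ_n(A) = |A ∩ {0,…,n}| / (n+1)`. -/
noncomputable def partialDensity (A : Set ℕ) (n : ℕ) : ℝ :=
  ((Finset.range (n + 1)).filter (· ∈ A)).card / (n + 1)

/-- The upper density of `A`: `limsup_n ρ_n(A)`. -/
noncomputable def upperDensity (A : Set ℕ) : ℝ :=
  Filter.limsup (partialDensity A) Filter.atTop

/-- `A` has asymptotic density `r`: `ρ_n(A) → r`. -/
def HasDensity (A : Set ℕ) (r : ℝ) : Prop :=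
  Filter.Tendsto (partialDensity A) Filter.atTop (nhds r)

open scoped Classical in
/-- The characteristic function of `A` (with values in `{0,1} ⊆ ℕ`). -/
noncomputable def charFun (A : Set ℕ) : ℕ → ℕ := fun n => if n ∈ A then 1 else 0

/-- `Φ` is a generic description of `A`: `Φ(x) = χ_A(x)` whenever `Φ(x)` is defined,
and the domain of `Φ` has density 1. -/
def IsGenericDescription (Φ : ℕ →. ℕ) (A : Set ℕ) : Prop :=
  (∀ x m, m ∈ Φ x → m = charFun A x) ∧ HasDensity {x | (Φ x).Dom} 1

/-- `A` is generically computable: some partial computable function is a generic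
description of `A`. -/
def GenericallyComputable (A : Set ℕ) : Prop :=
  ∃ Φ : ℕ →. ℕ, Partrec Φ ∧ IsGenericDescription Φ A

/-- `A` is computably enumerable: `A` is the domain of a partial computable function. -/
def CE (A : Set ℕ) : Prop :=
  ∃ f : ℕ →. ℕ, Partrec f ∧ A = {x | (f x).Dom}

/-- `A` is a computable set. -/
def ComputableSet (A : Set ℕ) : Prop := ComputablePred (· ∈ A)

/-- `A` is immune: infinite, with no infinite c.e. subset. -/
def Immune (A : Set ℕ) : Prop :=
  A.Infinite ∧ ∀ W : Set ℕ, CE W → W.Infinite → ¬W ⊆ A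

/-- `A` is bi-immune: both `A` and its complement are immune. -/
def BiImmune (A : Set ℕ) : Prop := Immune A ∧ Immune Aᶜ

/-- `A` and `B` are generically similar: their symmetric difference has density 0. -/
def GenericallySimilar (A B : Set ℕ) : Prop := HasDensity (symmDiff A B) 0

/-- `A` is coarsely computable: generically similar to a computable set. -/
def CoarselyComputable (A : Set ℕ) : Prop :=
  ∃ C : Set ℕ, ComputableSet C ∧ GenericallySimilar A C

/-- `R_k = {m : 2^k ∣ m, 2^(k+1) ∤ m}`. -/
def Rset (k : ℕ) : Set ℕ := {m | 2 ^ k ∣ m ∧ ¬2 ^ (k + 1) ∣ m}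

/-- `R(A) = ⋃_{n ∈ A} R_n`. -/
def RofSet (A : Set ℕ) : Set ℕ := ⋃ n ∈ A, Rset n

/-- Partial functions `ℕ →. ℕ` computable relative to a (total) oracle `O : ℕ → ℕ`. -/
inductive RecursiveIn' (O : ℕ → ℕ) : (ℕ →. ℕ) → Prop
  | zero : RecursiveIn' O (pure 0)
  | succ : RecursiveIn' O fun n => Part.some (n + 1)
  | left : RecursiveIn' O fun n => Part.some (Nat.unpair n).1
  | right : RecursiveIn' O fun n => Part.some (Nat.unpair n).2
  | oracle : RecursiveIn' O fun n => Part.some (O n)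
  | pair {f g : ℕ →. ℕ} : RecursiveIn' O f → RecursiveIn' O g →
      RecursiveIn' O fun n => Nat.pair <$> f n <*> g n
  | comp {f g : ℕ →. ℕ} : RecursiveIn' O f → RecursiveIn' O g →
      RecursiveIn' O fun n => g n >>= f
  | prec {f g : ℕ →. ℕ} : RecursiveIn' O f → RecursiveIn' O g →
      RecursiveIn' O (Nat.unpaired fun a n =>
        n.rec (f a) fun y IH => do let i ← IH; g (Nat.pair a (Nat.pair y i)))
  | rfind {f : ℕ →. ℕ} : RecursiveIn' O f →
      RecursiveIn' O fun a => Nat.rfind fun n => (fun m => m = 0) <$> f (Nat.pair a n)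

/-- `A ≤_T B`: the characteristic function of `A` is computable relative to `B`. -/
def TuringReducible' (A B : Set ℕ) : Prop :=
  RecursiveIn' (charFun B) fun n => Part.some (charFun A n)

/-- `A ≡_T B`. -/
def TuringEquivalent' (A B : Set ℕ) : Prop :=
  TuringReducible' A B ∧ TuringReducible' B A

/-!
Requirement `e` restrains a block `[2^j, 2^j + 2^(j-e))`, keeping it out of `A`, until program
`e` has output `0` on the whole block; the block is then released and a new one is chosen above
the current stage, so that none of its points has been enumerated yet. Everything not restrained
is enumerated into `A`.

The points restrained forever by `e` lie in a single block, hence make up at most a `2^(-e)`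
share of every initial segment; as only `e < x` can restrain `x`, summing over `e` shows that
the complement of `A` has density `0`.

If program `e` computes the characteristic function of some `C ⊆ A`, either its block is
eventually never released, and then `e` outputs `1` on some point of it, a point of `C` kept
out of `A`; or blocks are released infinitely often, each disjoint from `C` and of relative size
`1 / (2^e + 1)` in the segment it ends, so `C` does not have density `1`.
-/

open Nat.Partrec (Code)
open Nat.Partrec.Code (eval evaln)
open Denumerable (ofNat)

section Density

open Topology

lemma partialDensity_nonneg (A : Set ℕ) (n : ℕ) : 0 ≤ partialDensity A n := by
  unfold partialDensity
  positivity

lemma partialDensity_le_of_forall {A B : Set ℕ} {n : ℕ} (h : ∀ x ≤ n, x ∈ A → x ∈ B) :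
    partialDensity A n ≤ partialDensity B n := by
  unfold partialDensity
  refine div_le_div_of_nonneg_right ?_ (by positivity)
  exact_mod_cast Finset.card_le_card fun x => by
    simp only [Finset.mem_filter, Finset.mem_range]
    exact fun ⟨hx, hA⟩ => ⟨hx, h x (Nat.lt_succ_iff.1 hx) hA⟩

lemma partialDensity_compl (A : Set ℕ) (n : ℕ) :
    partialDensity Aᶜ n = 1 - partialDensity A n := by
  classical
  unfold partialDensity
  have hcard := Finset.card_filter_add_card_filter_not (s := Finset.range (n + 1)) (· ∈ A)
  rw [Finset.card_range] at hcard
  have hn : (n : ℝ) + 1 ≠ 0 := by positivity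
  field_simp
  simp only [Set.mem_compl_iff]
  rw [eq_sub_iff_add_eq, ← Nat.cast_add, add_comm, hcard]
  push_cast
  ring

lemma hasDensity_one_of_compl {A : Set ℕ} (h : HasDensity Aᶜ 0) : HasDensity A 1 := by
  have := h.const_sub 1
  simp only [sub_zero, partialDensity_compl, sub_sub_cancel] at this
  exact this

lemma partialDensity_biUnion_le {ι : Type*} (s : Finset ι) (K : ι → Set ℕ) (n : ℕ) :
    partialDensity (⋃ i ∈ s, K i) n ≤ ∑ i ∈ s, partialDensity (K i) n := by
  classical
  unfold partialDensity
  rw [← Finset.sum_div]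
  gcongr
  calc (((Finset.range (n + 1)).filter (· ∈ ⋃ i ∈ s, K i)).card : ℝ)
      = ((s.biUnion fun i => (Finset.range (n + 1)).filter (· ∈ K i)).card : ℝ) := by
        congr 2
        ext x
        simp
        tauto
    _ ≤ _ := by exact_mod_cast Finset.card_biUnion_le

lemma hasDensity_zero_of_finite {A : Set ℕ} (hA : A.Finite) : HasDensity A 0 := by
  refine tendsto_of_tendsto_of_tendsto_of_le_of_le tendsto_const_nhds
    ((tendsto_const_div_atTop_nhds_zero_nat (hA.toFinset.card : ℝ)).comp
      (tendsto_add_atTop_nat 1))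
    (partialDensity_nonneg A) fun n => ?_
  unfold partialDensity
  simp only [Function.comp_apply, Nat.cast_add, Nat.cast_one]
  gcongr
  intro x
  simp

lemma partialDensity_le_one_sub {C : Set ℕ} {D : Finset ℕ} {n : ℕ}
    (hD : D ⊆ Finset.range (n + 1)) (hDC : ∀ x ∈ D, x ∉ C) :
    partialDensity C n ≤ 1 - D.card / (n + 1) := by
  classical
  have : partialDensity D n = D.card / (n + 1) := by
    unfold partialDensity
    congr 3
    ext x
    simp only [Finset.mem_filter, Finset.mem_coe, and_iff_right_iff_imp]
    exact fun hx => hD hx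
  have hle : partialDensity D n ≤ partialDensity Cᶜ n :=
    partialDensity_le_of_forall fun x _ hx => hDC x hx
  rw [partialDensity_compl] at hle
  linarith

theorem hasDensity_zero_of_forall_exists_lt_mem {B : Set ℕ} {K : ℕ → Set ℕ}
    (hfin : ∀ e, (K e).Finite) (hK : ∀ e n, partialDensity (K e) n ≤ (1 / 2) ^ e)
    (hB : ∀ x ∈ B, ∃ e < x, x ∈ K e) : HasDensity B 0 := by
  refine tendsto_order.2 ⟨fun a ha => Eventually.of_forall fun n =>
    ha.trans_le (partialDensity_nonneg B n), fun a ha => ?_⟩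
  obtain ⟨E, hE⟩ :=
    exists_pow_lt_of_lt_one (by positivity : 0 < a / 4) (by norm_num : (1 / 2 : ℝ) < 1)
  have hhead :
      Tendsto (fun n => ∑ e ∈ Finset.range E, partialDensity (K e) n) atTop (𝓝 0) := by
    simpa using tendsto_finsetSum _ fun e _ => hasDensity_zero_of_finite (hfin e)
  filter_upwards [hhead.eventually (gt_mem_nhds (half_pos ha)), eventually_ge_atTop E]
    with n hhead_lt hEn
  calc partialDensity B n
      ≤ partialDensity (⋃ e ∈ Finset.range (n + 1), K e) n :=
        partialDensity_le_of_forall fun x hx hxB => by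
          obtain ⟨e, he, hxe⟩ := hB x hxB
          exact Set.mem_biUnion (Finset.mem_range.2 (by omega)) hxe
    _ ≤ ∑ e ∈ Finset.range (n + 1), partialDensity (K e) n := partialDensity_biUnion_le _ _ _
    _ = ∑ e ∈ Finset.range E, partialDensity (K e) n
          + ∑ e ∈ Finset.Ico E (n + 1), partialDensity (K e) n :=
        (Finset.sum_range_add_sum_Ico _ (by omega)).symm
    _ ≤ ∑ e ∈ Finset.range E, partialDensity (K e) n
          + ∑ e ∈ Finset.Ico E (n + 1), (1 / 2 : ℝ) ^ e := by
        gcongr with e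
        exact hK e n
    _ ≤ ∑ e ∈ Finset.range E, partialDensity (K e) n + (1 / 2) ^ E / (1 - 1 / 2) := by
        gcongr; exact geom_sum_Ico_le_of_lt_one (by norm_num) (by norm_num)
    _ < a := by norm_num; linarith

end Density

namespace DensityOneCE

def block (e j : ℕ) : Finset ℕ := Finset.Ico (2 ^ j) (2 ^ j + 2 ^ (j - e))

lemma pow_le_of_mem_block {e j x : ℕ} (hx : x ∈ block e j) : 2 ^ j ≤ x :=
  (Finset.mem_Ico.1 hx).1

lemma partialDensity_block_le {e j : ℕ} (hej : e ≤ j) (n : ℕ) :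
    partialDensity (block e j) n ≤ (1 / 2) ^ e := by
  rcases lt_or_ge n (2 ^ j) with hn | hn
  · calc partialDensity (block e j) n ≤ partialDensity ∅ n :=
          partialDensity_le_of_forall fun x hx hxb => by
            have := pow_le_of_mem_block hxb
            omega
      _ = 0 := by simp [partialDensity]
      _ ≤ _ := by positivity
  unfold partialDensity
  have hcard :
      ((Finset.range (n + 1)).filter (· ∈ (block e j : Set ℕ))).card ≤ 2 ^ (j - e) :=
    calc _ ≤ (block e j).card := Finset.card_le_card fun x => by simp
      _ = 2 ^ (j - e) := by simp [block]
  have hpow : (2 : ℝ) ^ (j - e) * 2 ^ e ≤ n + 1 := by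
    rw [← pow_add, Nat.sub_add_cancel hej]
    exact_mod_cast hn.trans (Nat.le_succ n)
  rw [div_le_iff₀ (by positivity), one_div_pow, div_mul_eq_mul_div, one_mul,
    le_div_iff₀ (by positivity)]
  calc _ ≤ (2 : ℝ) ^ (j - e) * 2 ^ e := by gcongr; exact_mod_cast hcard
    _ ≤ _ := hpow

theorem not_hasDensity_one_of_disjoint_block {C : Set ℕ} {e : ℕ}
    (h : ∀ N, ∃ j ≥ N, ∀ x ∈ block e j, x ∉ C) : ¬ HasDensity C 1 := by
  intro hC
  have hδ : (1 : ℝ) - 1 / (2 ^ e + 1) < 1 := by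
    have : (0 : ℝ) < 1 / (2 ^ e + 1) := by positivity
    linarith
  obtain ⟨N, hN⟩ := eventually_atTop.1 (hC.eventually (lt_mem_nhds hδ))
  obtain ⟨j, hj, hdisj⟩ := h (N + e)
  have hsize : 2 ^ j + 2 ^ (j - e) = 2 ^ (j - e) * (2 ^ e + 1) := by
    rw [mul_add, ← pow_add, Nat.sub_add_cancel (by omega), mul_one]
  have hNj : N ≤ 2 ^ j := (by omega : N ≤ j).trans Nat.lt_two_pow_self.le
  have hpos : 1 ≤ 2 ^ (j - e) := Nat.one_le_two_pow
  have hle := partialDensity_le_one_sub (C := C) (n := 2 ^ j + 2 ^ (j - e) - 1)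
    (fun x hx => by simp [block] at hx ⊢; omega) hdisj
  have hn : ((2 ^ j + 2 ^ (j - e) - 1 : ℕ) : ℝ) + 1 = (2 ^ (j - e) : ℝ) * (2 ^ e + 1) := by
    rw [Nat.cast_sub (by omega), hsize]
    push_cast
    ring
  rw [hn, block, Nat.card_Ico, Nat.add_sub_cancel_left, Nat.cast_pow, Nat.cast_ofNat,
    div_mul_eq_div_div, div_self (by positivity)] at hle
  exact (hN _ (by omega)).not_ge hle

def Cleared (e s j : ℕ) : Prop := ∀ x ∈ block e j, evaln s (ofNat Code e) x = some 0

instance (e s j : ℕ) : Decidable (Cleared e s j) := Finset.decidableDforallFinset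

def blockIndex (e : ℕ) : ℕ → ℕ
  | 0 => e + 1
  | s + 1 => if Cleared e s (blockIndex e s) then s + e + 2 else blockIndex e s

def Enumerated (x s : ℕ) : Prop := x ≤ s ∧ ∀ e < x, x ∉ block e (blockIndex e s)

def ceSet : Set ℕ := {x | ∃ s, Enumerated x s}

def Restrained (e : ℕ) : Set ℕ := {x | ∀ s ≥ x, x ∈ block e (blockIndex e s)}

variable {e s t x : ℕ}

lemma blockIndex_succ_of_cleared (h : Cleared e s (blockIndex e s)) :
    blockIndex e (s + 1) = s + e + 2 := by
  rw [blockIndex, if_pos h]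

lemma blockIndex_succ_of_not_cleared (h : ¬ Cleared e s (blockIndex e s)) :
    blockIndex e (s + 1) = blockIndex e s := by
  rw [blockIndex, if_neg h]

lemma blockIndex_bounds (e s : ℕ) :
    e + 1 ≤ blockIndex e s ∧ blockIndex e s ≤ s + e + 1 := by
  induction s with
  | zero => simp [blockIndex]
  | succ s ih =>
    by_cases h : Cleared e s (blockIndex e s)
    · rw [blockIndex_succ_of_cleared h]; omega
    · rw [blockIndex_succ_of_not_cleared h]; omega

lemma blockIndex_monotone (e : ℕ) : Monotone (blockIndex e) := by
  refine monotone_nat_of_le_succ fun s => ?_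
  by_cases h : Cleared e s (blockIndex e s)
  · rw [blockIndex_succ_of_cleared h]; linarith [(blockIndex_bounds e s).2]
  · rw [blockIndex_succ_of_not_cleared h]

lemma lt_of_mem_block_blockIndex (hx : x ∈ block e (blockIndex e s)) : e < x :=
  calc e < blockIndex e s := (blockIndex_bounds e s).1
    _ < 2 ^ blockIndex e s := Nat.lt_two_pow_self
    _ ≤ x := pow_le_of_mem_block hx

/-- A block chosen at stage `t + 1` starts at `2 ^ (t + e + 2) > t`, so it contains no `x ≤ t`. -/
lemma blockIndex_eq_of_mem_block (hst : s ≤ t) (hxs : x ≤ s)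
    (hx : x ∈ block e (blockIndex e t)) : blockIndex e s = blockIndex e t := by
  induction t, hst using Nat.le_induction with
  | base => rfl
  | succ t hst ih =>
    by_cases h : Cleared e t (blockIndex e t)
    · rw [blockIndex_succ_of_cleared h] at hx
      have := pow_le_of_mem_block hx
      have : t + e + 2 < 2 ^ (t + e + 2) := Nat.lt_two_pow_self
      omega
    · rw [blockIndex_succ_of_not_cleared h] at hx ⊢
      exact ih hx

lemma mem_restrained_of_forall_ge (h : ∀ t ≥ s, x ∈ block e (blockIndex e t)) :
    x ∈ Restrained e := fun t hxt => by
  have hx := h (max t s) (le_max_right _ _)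
  rwa [blockIndex_eq_of_mem_block (le_max_left _ _) hxt hx]

lemma blockIndex_eq_of_forall_not_cleared {s₀ : ℕ}
    (h : ∀ s ≥ s₀, ¬ Cleared e s (blockIndex e s)) (hs : s₀ ≤ s) :
    blockIndex e s = blockIndex e s₀ := by
  induction s, hs using Nat.le_induction with
  | base => rfl
  | succ s hs ih => rw [blockIndex_succ_of_not_cleared (h s hs), ih]

lemma block_subset_restrained {s₀ : ℕ} (h : ∀ s ≥ s₀, ¬ Cleared e s (blockIndex e s)) :
    ↑(block e (blockIndex e s₀)) ⊆ Restrained e := fun _ hx =>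
  mem_restrained_of_forall_ge fun t ht => by rwa [blockIndex_eq_of_forall_not_cleared h ht]

lemma exists_cleared_of_frequently_cleared
    (h : ∀ s₀, ∃ s ≥ s₀, Cleared e s (blockIndex e s)) (N : ℕ) :
    ∃ s, N ≤ blockIndex e s ∧ Cleared e s (blockIndex e s) := by
  obtain ⟨s, hs, hcl⟩ := h N
  obtain ⟨t, ht, hcl'⟩ := h (s + 1)
  refine ⟨t, ?_, hcl'⟩
  calc N ≤ s + e + 2 := by omega
    _ = blockIndex e (s + 1) := (blockIndex_succ_of_cleared hcl).symm
    _ ≤ blockIndex e t := blockIndex_monotone e ht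

lemma notMem_ceSet_of_mem_restrained (hx : x ∈ Restrained e) : x ∉ ceSet :=
  fun ⟨s, hxs, hfree⟩ => hfree e (lt_of_mem_block_blockIndex (hx s hxs)) (hx s hxs)

lemma eventually_notMem_block_of_notMem_restrained (hx : x ∉ Restrained e) :
    ∀ᶠ t in atTop, x ∉ block e (blockIndex e t) := by
  simp only [Restrained, Set.mem_ofPred_eq, not_forall] at hx
  obtain ⟨s, hxs, hs⟩ := hx
  filter_upwards [eventually_ge_atTop s] with t hst ht
  exact hs (blockIndex_eq_of_mem_block hst hxs ht ▸ ht)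

lemma exists_lt_mem_restrained_of_notMem_ceSet (hx : x ∉ ceSet) :
    ∃ e < x, x ∈ Restrained e := by
  by_contra! h
  have : ∀ᶠ s in atTop, Enumerated x s :=
    (eventually_ge_atTop x).and <| (Set.finite_lt_nat x).eventually_all.2 fun e he =>
      eventually_notMem_block_of_notMem_restrained (h e he)
  exact hx this.exists

lemma restrained_subset_block (hx : x ∈ Restrained e) :
    Restrained e ⊆ block e (blockIndex e x) := fun y hy => by
  have hxy := hx (max x y) (le_max_left _ _)
  rw [blockIndex_eq_of_mem_block (le_max_left _ _) le_rfl hxy]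
  exact hy _ (le_max_right _ _)

lemma restrained_finite (e : ℕ) : (Restrained e).Finite := by
  obtain h | ⟨x, hx⟩ := (Restrained e).eq_empty_or_nonempty
  · exact h ▸ Set.finite_empty
  · exact (block e (blockIndex e x)).finite_toSet.subset (restrained_subset_block hx)

lemma partialDensity_restrained_le (e n : ℕ) : partialDensity (Restrained e) n ≤ (1 / 2) ^ e :=
  calc partialDensity (Restrained e) n ≤ partialDensity (block e (blockIndex e n)) n :=
        partialDensity_le_of_forall fun x hxn hx => hx n hxn
    _ ≤ (1 / 2) ^ e := partialDensity_block_le (by linarith [(blockIndex_bounds e n).1]) n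

theorem hasDensity_ceSet : HasDensity ceSet 1 :=
  hasDensity_one_of_compl <| hasDensity_zero_of_forall_exists_lt_mem restrained_finite
    partialDensity_restrained_le fun _ hx => exists_lt_mem_restrained_of_notMem_ceSet hx

section Computability

open Primrec

lemma primrec_pow : Primrec₂ ((· ^ ·) : ℕ → ℕ → ℕ) :=
  Primrec₂.unpaired'.1 Nat.Primrec.pow

lemma primrecPred_cleared : PrimrecPred fun p : ℕ × ℕ × ℕ => Cleared p.1 p.2.1 p.2.2 := by
  have hR : PrimrecRel fun (i : ℕ) (p : ℕ × ℕ × ℕ) =>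
      evaln p.2.1 (ofNat Code p.1) (2 ^ p.2.2 + i) = some 0 :=
    Primrec.eq.comp (Nat.Partrec.Code.primrec_evaln.comp <| pair
        (pair (fst.comp <| snd.comp snd) ((Primrec.ofNat Code).comp <| fst.comp snd))
        (nat_add.comp (primrec_pow.comp (const 2) (snd.comp <| snd.comp snd)) fst))
      (const _)
  refine (hR.forall_mem_list.comp (list_range.comp <| primrec_pow.comp (const 2)
    (nat_sub.comp (snd.comp snd) fst)) Primrec.id).of_eq fun ⟨e, s, j⟩ => ?_
  simp only [Cleared, block, Finset.mem_Ico, List.mem_range, id]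
  constructor
  · intro h x ⟨hjx, hx⟩
    simpa [Nat.add_sub_cancel' hjx] using h (x - 2 ^ j) (by omega)
  · intro h i hi
    exact h _ ⟨by omega, by omega⟩

lemma primrec_blockIndex : Primrec₂ blockIndex := by
  refine (nat_rec (f := fun e => e + 1)
    (g := fun e (p : ℕ × ℕ) => if Cleared e p.1 p.2 then p.1 + e + 2 else p.2) succ
    (ite (primrecPred_cleared.comp (pair fst snd))
      (nat_add.comp (nat_add.comp (fst.comp snd) fst) (const 2)) (snd.comp snd))).of_eq
    fun e s => ?_
  induction s with
  | zero => rfl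
  | succ s ih => simp only [blockIndex, ← ih]

lemma primrecRel_enumerated : PrimrecRel Enumerated := by
  have hR : PrimrecRel fun (e : ℕ) (p : ℕ × ℕ) =>
      ¬ (2 ^ blockIndex e p.2 ≤ p.1 ∧
        p.1 < 2 ^ blockIndex e p.2 + 2 ^ (blockIndex e p.2 - e)) := by
    have hj : Primrec fun q : ℕ × ℕ × ℕ => blockIndex q.1 q.2.2 :=
      primrec_blockIndex.comp fst (snd.comp snd)
    have hlo : Primrec fun q : ℕ × ℕ × ℕ => 2 ^ blockIndex q.1 q.2.2 :=
      primrec_pow.comp (const 2) hj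
    exact .not <| .and (nat_le.comp hlo (fst.comp snd))
      (nat_lt.comp (fst.comp snd) (nat_add.comp hlo (primrec_pow.comp (const 2)
        (nat_sub.comp hj fst))))
  refine (nat_le.and (hR.forall_mem_list.comp (list_range.comp fst) Primrec.id)).of_eq
    fun ⟨x, s⟩ => ?_
  simp [Enumerated, block]

theorem ce_ceSet : CE ceSet := by
  classical
  refine ⟨fun x => Nat.rfind (fun s => Part.some (decide (Enumerated x s)) : ℕ →. Bool),
    Partrec.rfind primrecRel_enumerated.decide.to_comp.partrec₂, ?_⟩
  ext x
  simp only [ceSet, Set.mem_ofPred_eq]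
  refine Iff.symm (Nat.rfind_dom.trans ?_)
  simp only [Part.mem_some_iff, Part.some_dom, implies_true, and_true, eq_comm (a := true),
    decide_eq_true_eq]

end Computability

lemma exists_ofNat_code_eval_eq_charFun {C : Set ℕ} (hC : ComputableSet C) :
    ∃ e, eval (ofNat Code e) = fun x => Part.some (charFun C x) := by
  obtain ⟨f, hf, hfC⟩ := ComputablePred.computable_iff.1 hC
  have hchar : charFun C = fun x => (f x).toNat := by
    funext x
    simp [charFun, hfC, Bool.toNat]
  have : Nat.Partrec fun x => Part.some (charFun C x) := by
    rw [hchar]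
    exact Partrec.nat_iff.1 ((Primrec.dom_bool Bool.toNat).to_comp.comp hf).partrec
  obtain ⟨c, hc⟩ := Nat.Partrec.Code.exists_code.1 this
  exact ⟨Encodable.encode c, by rw [Denumerable.ofNat_encode, hc]⟩

lemma eventually_forall_evaln_eq {c : Code} {v : ℕ → ℕ} (F : Finset ℕ)
    (hv : ∀ x ∈ F, v x ∈ eval c x) :
    ∀ᶠ k in atTop, ∀ x ∈ F, evaln k c x = some (v x) :=
  (Filter.eventually_all_finset F).2 fun x hx => by
    obtain ⟨k, hk⟩ := Nat.Partrec.Code.evaln_complete.1 (hv x hx)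
    filter_upwards [eventually_ge_atTop k] with k' hk' using
      Nat.Partrec.Code.evaln_mono hk' hk

theorem not_hasDensity_one_of_subset_ceSet {C : Set ℕ} (hCA : C ⊆ ceSet)
    (hC : ComputableSet C) : ¬ HasDensity C 1 := by
  obtain ⟨e, he⟩ := exists_ofNat_code_eval_eq_charFun hC
  have notMem_of_cleared : ∀ {s j}, Cleared e s j → ∀ x ∈ block e j, x ∉ C := by
    intro s j hcl x hx hxC
    have h0 := Nat.Partrec.Code.evaln_sound (hcl x hx)
    simp [he, charFun, hxC] at h0
  by_cases hstable : ∃ s₀, ∀ s ≥ s₀, ¬ Cleared e s (blockIndex e s)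
  · obtain ⟨s₀, hs₀⟩ := hstable
    obtain ⟨s, hs, hconv⟩ := ((eventually_ge_atTop s₀).and
      (eventually_forall_evaln_eq (block e (blockIndex e s₀)) (c := ofNat Code e) (v := charFun C)
        fun x _ => by rw [he]; exact Part.mem_some _)).exists
    obtain ⟨x, hx, hx0⟩ : ∃ x ∈ block e (blockIndex e s₀), charFun C x ≠ 0 := by
      by_contra! h
      refine hs₀ s hs ?_
      rw [blockIndex_eq_of_forall_not_cleared hs₀ hs]
      exact fun x hx => by rw [hconv x hx, h x hx]
    have hxC : x ∈ C := by
      by_contra h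
      simp [charFun, h] at hx0
    exact (notMem_ceSet_of_mem_restrained (block_subset_restrained hs₀ hx) (hCA hxC)).elim
  · push Not at hstable
    refine not_hasDensity_one_of_disjoint_block (e := e) fun N => ?_
    obtain ⟨s, hN, hcl⟩ := exists_cleared_of_frequently_cleared hstable N
    exact ⟨_, hN, notMem_of_cleared hcl⟩

end DensityOneCE

/-- there is a c.e. set of density 1 with no computable subset of
density 1. -/
theorem stmt14 :
    ∃ A : Set ℕ, CE A ∧ HasDensity A 1 ∧
      ∀ C : Set ℕ, C ⊆ A → ComputableSet C → ¬HasDensity C 1 :=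
  ⟨DensityOneCE.ceSet, DensityOneCE.ce_ceSet, DensityOneCE.hasDensity_ceSet,
    fun _ hCA hC => DensityOneCE.not_hasDensity_one_of_subset_ceSet hCA hC⟩
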